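/- Under the double-truncation estimator risk formula $R(k_1,k_2) = \frac{k_1}{n} + \sum_{k=k_1+1}^{k_2}(\tilde\lambda_k(1+\tfrac1m) + \tfrac{1}{nm}) + \sum_{k>k_2}(g_k^2 + \tilde\lambda_k)$ with $\tilde\lambda_k \leq C k^{-1-2\tilde\alpha}$ and $g \in \mathcal{S}(\alpha,R)$, choosing $k_1 = \lceil n^{1/(1+2\tilde\alpha)}\rceil$ and $k_2 = \max(k_1, \lceil(nm)^{1/(1+2\alpha)}\rceil)$ yields $\sup_{g\in\mathcal{S}(\alpha,R)} R(k_1,k_2) \leq C'\big( (nm)^{-2\alpha/(1+2\alpha)} + n^{-2\tilde\alpha/(1+2\tilde\alpha)}\big)$ for some constant $C'$ depending only on $C, \alpha, \tilde\alpha, R$. -/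

import Mathlib

open Real Finset

/-! Each of the three parts of the risk is controlled separately. The bias of the first
truncation is `k₁ / n`; the variance sums `∑_{k ≥ k₁} λ̃ₖ` are bounded by comparison with
`∫_{k₁}^∞ t^(-1-2ᾱ) dt = k₁^(-2ᾱ) / (2ᾱ)`; the `k₂ - k₁` noise terms cost `k₂ / (nm)`; and on the
Sobolev ellipsoid `∑_{k > k₂} gₖ² ≤ R² k₂^(-2α)`. The thresholds `k₁ ≈ n^(1/(1+2ᾱ))` and
`k₂ ≳ (nm)^(1/(1+2α))` balance `k₁ / n` against `k₁^(-2ᾱ)` and `k₂ / (nm)` against `k₂^(-2α)`. -/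

theorem sum_range_rpow_neg_one_sub_le {s x : ℝ} (hs : 0 < s) (hx : 0 < x) (N : ℕ) :
    ∑ j ∈ range N, (x + ↑(j + 1)) ^ (-1 - s) ≤ x ^ (-s) / s := by
  have hanti : AntitoneOn (fun t : ℝ => t ^ (-1 - s)) (Set.Icc x (x + N)) :=
    fun a ha _ _ hab => rpow_le_rpow_of_nonpos (hx.trans_le ha.1) hab (by linarith)
  have hzero : (0 : ℝ) ∉ Set.uIcc x (x + N) := by
    rw [Set.uIcc_of_le (by simp)]
    exact fun h => hx.not_ge h.1
  calc ∑ j ∈ range N, (x + ↑(j + 1)) ^ (-1 - s)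
      ≤ ∫ t in x..x + N, t ^ (-1 - s) := hanti.sum_le_integral
    _ = (x ^ (-s) - (x + N) ^ (-s)) / s := by
      rw [integral_rpow (Or.inr ⟨by linarith, hzero⟩), show -1 - s + 1 = -s by ring, div_neg,
        ← neg_div, neg_sub]
    _ ≤ x ^ (-s) / s := by
      gcongr
      exact sub_le_self _ (by positivity)

section Decay

variable {s C : ℝ} {f : ℕ → ℝ}

theorem sum_range_nat_add_le_of_decay (hs : 0 < s) (hf₀ : ∀ k, 0 ≤ f k)
    (hf : ∀ k, f k ≤ C * ((k + 1 : ℕ) : ℝ) ^ (-1 - s)) {K : ℕ} (hK : 0 < K) (N : ℕ) :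
    ∑ j ∈ range N, f (K + j) ≤ C * (K : ℝ) ^ (-s) / s := by
  have hC : 0 ≤ C := by simpa using (hf₀ 0).trans (hf 0)
  calc ∑ j ∈ range N, f (K + j)
      ≤ C * ∑ j ∈ range N, ((K : ℝ) + ↑(j + 1)) ^ (-1 - s) := by
        rw [mul_sum]
        refine sum_le_sum fun j _ => (hf (K + j)).trans_eq ?_
        push_cast
        ring_nf
    _ ≤ C * ((K : ℝ) ^ (-s) / s) := by
        gcongr
        exact sum_range_rpow_neg_one_sub_le hs (by positivity) N
    _ = C * (K : ℝ) ^ (-s) / s := (mul_div_assoc ..).symm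

theorem summable_nat_add_of_decay (hs : 0 < s) (hf₀ : ∀ k, 0 ≤ f k)
    (hf : ∀ k, f k ≤ C * ((k + 1 : ℕ) : ℝ) ^ (-1 - s)) {K : ℕ} (hK : 0 < K) :
    Summable fun j => f (K + j) :=
  summable_of_sum_range_le (fun _ => hf₀ _) (sum_range_nat_add_le_of_decay hs hf₀ hf hK)

theorem tsum_nat_add_le_of_decay (hs : 0 < s) (hf₀ : ∀ k, 0 ≤ f k)
    (hf : ∀ k, f k ≤ C * ((k + 1 : ℕ) : ℝ) ^ (-1 - s)) {K : ℕ} (hK : 0 < K) :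
    ∑' j, f (K + j) ≤ C * (K : ℝ) ^ (-s) / s :=
  Real.tsum_le_of_sum_range_le (fun _ => hf₀ _) (sum_range_nat_add_le_of_decay hs hf₀ hf hK)

theorem sum_Ico_le_of_decay (hs : 0 < s) (hf₀ : ∀ k, 0 ≤ f k)
    (hf : ∀ k, f k ≤ C * ((k + 1 : ℕ) : ℝ) ^ (-1 - s)) {K : ℕ} (hK : 0 < K) (L : ℕ) :
    ∑ k ∈ Ico K L, f k ≤ C * (K : ℝ) ^ (-s) / s := by
  rw [sum_Ico_eq_sum_range]
  exact sum_range_nat_add_le_of_decay hs hf₀ hf hK _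

end Decay

section SobolevEllipsoid

variable {α R : ℝ} {g : ℕ → ℝ}

theorem sq_nat_add_le_mul_weight (hα : 0 ≤ α) {K : ℕ} (hK : 0 < K) (j : ℕ) :
    g (K + j) ^ 2 ≤ (K : ℝ) ^ (-(2 * α)) * (g (K + j) ^ 2 * ((K + j + 1 : ℕ) : ℝ) ^ (2 * α)) := by
  have hK' : (0 : ℝ) < K := by exact_mod_cast hK
  rw [rpow_neg hK'.le, inv_mul_eq_div, le_div_iff₀ (by positivity)]
  gcongr
  omega

theorem summable_sq_nat_add (hα : 0 ≤ α)
    (hg : Summable fun k => g k ^ 2 * ((k + 1 : ℕ) : ℝ) ^ (2 * α)) {K : ℕ} (hK : 0 < K) :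
    Summable fun j => g (K + j) ^ 2 :=
  .of_nonneg_of_le (fun _ => sq_nonneg _) (sq_nat_add_le_mul_weight hα hK)
    ((hg.comp_injective (add_right_injective K)).mul_left _)

theorem tsum_sq_nat_add_le (hα : 0 ≤ α)
    (hg : Summable fun k => g k ^ 2 * ((k + 1 : ℕ) : ℝ) ^ (2 * α))
    (hgR : ∑' k, g k ^ 2 * ((k + 1 : ℕ) : ℝ) ^ (2 * α) ≤ R ^ 2) {K : ℕ} (hK : 0 < K) :
    ∑' j, g (K + j) ^ 2 ≤ R ^ 2 * (K : ℝ) ^ (-(2 * α)) := by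
  have hweighted := hg.comp_injective (add_right_injective K)
  calc ∑' j, g (K + j) ^ 2
      ≤ ∑' j, (K : ℝ) ^ (-(2 * α)) * (g (K + j) ^ 2 * ((K + j + 1 : ℕ) : ℝ) ^ (2 * α)) :=
        Summable.tsum_le_tsum (sq_nat_add_le_mul_weight hα hK) (summable_sq_nat_add hα hg hK)
          (hweighted.mul_left _)
    _ = (K : ℝ) ^ (-(2 * α)) * ∑' j, g (K + j) ^ 2 * ((K + j + 1 : ℕ) : ℝ) ^ (2 * α) :=
        tsum_mul_left
    _ ≤ (K : ℝ) ^ (-(2 * α)) * R ^ 2 := by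
        gcongr
        refine (hweighted.tsum_le_tsum_of_inj (K + ·) (add_right_injective K) (fun _ _ => ?_)
          (fun _ => le_rfl) hg).trans hgR
        positivity
    _ = R ^ 2 * (K : ℝ) ^ (-(2 * α)) := mul_comm _ _

end SobolevEllipsoid

noncomputable def doubleTruncationRisk (n m : ℕ) (tlam g : ℕ → ℝ) (k₁ k₂ : ℕ) : ℝ :=
  (k₁ : ℝ) / n + ∑ k ∈ Ico k₁ k₂, (tlam k * (1 + (m : ℝ)⁻¹) + ((n : ℝ) * m)⁻¹) +
    ∑' j, (g (k₂ + j) ^ 2 + tlam (k₂ + j))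

theorem doubleTruncationRisk_le {n m : ℕ} (hm : 1 ≤ m) {s C α R : ℝ} (hs : 0 < s) (hα : 0 ≤ α)
    {tlam g : ℕ → ℝ} (htlam₀ : ∀ k, 0 ≤ tlam k)
    (htlam : ∀ k, tlam k ≤ C * ((k + 1 : ℕ) : ℝ) ^ (-1 - s))
    (hg : Summable fun k => g k ^ 2 * ((k + 1 : ℕ) : ℝ) ^ (2 * α))
    (hgR : ∑' k, g k ^ 2 * ((k + 1 : ℕ) : ℝ) ^ (2 * α) ≤ R ^ 2)
    {k₁ k₂ : ℕ} (hk₁ : 0 < k₁) (hk : k₁ ≤ k₂) :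
    doubleTruncationRisk n m tlam g k₁ k₂ ≤ (k₁ : ℝ) / n + ((k₂ - k₁ : ℕ) : ℝ) / (n * m) +
      3 * C / s * (k₁ : ℝ) ^ (-s) + R ^ 2 * (k₂ : ℝ) ^ (-(2 * α)) := by
  have hk₂ : 0 < k₂ := hk₁.trans_le hk
  have hC : 0 ≤ C := by simpa using (htlam₀ 0).trans (htlam 0)
  have hnoise : ∑ _k ∈ Ico k₁ k₂, ((n : ℝ) * m)⁻¹ = ((k₂ - k₁ : ℕ) : ℝ) / (n * m) := by
    rw [sum_const, Nat.card_Ico, nsmul_eq_mul, div_eq_mul_inv]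
  have hmiddle : ∑ k ∈ Ico k₁ k₂, tlam k * (1 + (m : ℝ)⁻¹) ≤ C * (k₁ : ℝ) ^ (-s) / s * 2 := by
    rw [← sum_mul]
    have hm' : (m : ℝ)⁻¹ ≤ 1 := inv_le_one_of_one_le₀ (by exact_mod_cast hm)
    gcongr
    · exact sum_Ico_le_of_decay hs htlam₀ htlam hk₁ k₂
    · linarith
  have htail : ∑' j, tlam (k₂ + j) ≤ C * (k₁ : ℝ) ^ (-s) / s := by
    have hanti : (k₂ : ℝ) ^ (-s) ≤ (k₁ : ℝ) ^ (-s) :=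
      rpow_le_rpow_of_nonpos (Nat.cast_pos.mpr hk₁) (Nat.cast_le.mpr hk) (by linarith)
    refine (tsum_nat_add_le_of_decay hs htlam₀ htlam hk₂).trans ?_
    gcongr
  have hsq := tsum_sq_nat_add_le hα hg hgR hk₂
  rw [doubleTruncationRisk, sum_add_distrib, hnoise,
    (summable_sq_nat_add hα hg hk₂).tsum_add (summable_nat_add_of_decay hs htlam₀ htlam hk₂)]
  have hsplit : 3 * C / s * (k₁ : ℝ) ^ (-s) = C * (k₁ : ℝ) ^ (-s) / s * 2 +
      C * (k₁ : ℝ) ^ (-s) / s := by ring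
  linarith

section OracleThreshold

variable {N a : ℝ}

theorem rpow_neg_le_of_rpow_one_div_le (hN : 0 < N) (ha : 0 ≤ a) {y : ℝ}
    (hy : N ^ (1 / (1 + 2 * a)) ≤ y) :
    y ^ (-(2 * a)) ≤ N ^ (-(2 * a) / (1 + 2 * a)) :=
  calc y ^ (-(2 * a))
      ≤ (N ^ (1 / (1 + 2 * a))) ^ (-(2 * a)) :=
        rpow_le_rpow_of_nonpos (by positivity) hy (by linarith)
    _ = N ^ (-(2 * a) / (1 + 2 * a)) := by rw [← rpow_mul hN.le]; ring_nf

theorem ceil_rpow_one_div_div_le (hN : 1 ≤ N) (ha : 0 ≤ a) :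
    (⌈N ^ (1 / (1 + 2 * a))⌉₊ : ℝ) / N ≤ 2 * N ^ (-(2 * a) / (1 + 2 * a)) := by
  have hN₀ : 0 < N := by linarith
  have hceil : (⌈N ^ (1 / (1 + 2 * a))⌉₊ : ℝ) < 2 * N ^ (1 / (1 + 2 * a)) :=
    Nat.ceil_lt_two_mul (by linarith [one_le_rpow hN (by positivity : 0 ≤ 1 / (1 + 2 * a))])
  have hexp : -(2 * a) / (1 + 2 * a) = 1 / (1 + 2 * a) - 1 := by field_simp; ring
  rw [hexp, rpow_sub_one hN₀.ne', mul_div_assoc']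
  gcongr

end OracleThreshold

theorem double_truncation_oracle_rate_general (C α tα R : ℝ) (hC : 0 < C) (hα : 0 < α)
    (htα : 0 < tα) :
    ∃ C' : ℝ, 0 < C' ∧
      ∀ n m : ℕ, 1 ≤ n → 1 ≤ m →
      ∀ tlam : ℕ → ℝ, (∀ k, 0 ≤ tlam k) →
        (∀ k : ℕ, tlam k ≤ C * ((k + 1 : ℕ) : ℝ) ^ (-1 - 2 * tα)) →
      ∀ g : ℕ → ℝ,
        Summable (fun k => g k ^ 2 * ((k + 1 : ℕ) : ℝ) ^ (2 * α)) →
        (∑' k, g k ^ 2 * ((k + 1 : ℕ) : ℝ) ^ (2 * α)) ≤ R ^ 2 →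
      ((⌈(n : ℝ) ^ (1 / (1 + 2 * tα))⌉₊ : ℝ) / n +
          (∑ k ∈ Finset.Ico ⌈(n : ℝ) ^ (1 / (1 + 2 * tα))⌉₊
              (max ⌈(n : ℝ) ^ (1 / (1 + 2 * tα))⌉₊
                ⌈((n * m : ℕ) : ℝ) ^ (1 / (1 + 2 * α))⌉₊),
            (tlam k * (1 + (m : ℝ)⁻¹) + ((n : ℝ) * m)⁻¹)) +
          ∑' j, (g ((max ⌈(n : ℝ) ^ (1 / (1 + 2 * tα))⌉₊
                ⌈((n * m : ℕ) : ℝ) ^ (1 / (1 + 2 * α))⌉₊) + j) ^ 2 +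
              tlam ((max ⌈(n : ℝ) ^ (1 / (1 + 2 * tα))⌉₊
                ⌈((n * m : ℕ) : ℝ) ^ (1 / (1 + 2 * α))⌉₊) + j))) ≤
        C' * (((n * m : ℕ) : ℝ) ^ (-(2 * α) / (1 + 2 * α)) +
          (n : ℝ) ^ (-(2 * tα) / (1 + 2 * tα))) := by
  refine ⟨2 + 3 * C / (2 * tα) + R ^ 2, by positivity, ?_⟩
  intro n m hn hm tlam htlam₀ htlam g hg hgR
  set k₁ := ⌈(n : ℝ) ^ (1 / (1 + 2 * tα))⌉₊
  set c₂ := ⌈((n * m : ℕ) : ℝ) ^ (1 / (1 + 2 * α))⌉₊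
  set A := ((n * m : ℕ) : ℝ) ^ (-(2 * α) / (1 + 2 * α))
  set B := (n : ℝ) ^ (-(2 * tα) / (1 + 2 * tα))
  have hn' : (1 : ℝ) ≤ n := by exact_mod_cast hn
  have hnm : (1 : ℝ) ≤ ((n * m : ℕ) : ℝ) := by exact_mod_cast Nat.mul_pos hn hm
  have hk₁ : 0 < k₁ := Nat.ceil_pos.mpr (by positivity)
  have hbias : (k₁ : ℝ) / n ≤ 2 * B := ceil_rpow_one_div_div_le hn' htα.le
  have hnoise : ((max k₁ c₂ - k₁ : ℕ) : ℝ) / (n * m) ≤ 2 * A := by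
    refine le_trans ?_ (ceil_rpow_one_div_div_le hnm hα.le)
    push_cast
    gcongr
    exact_mod_cast (by omega : max k₁ c₂ - k₁ ≤ c₂)
  have hvar : (k₁ : ℝ) ^ (-(2 * tα)) ≤ B :=
    rpow_neg_le_of_rpow_one_div_le (by positivity) htα.le (Nat.le_ceil _)
  have hsq : ((max k₁ c₂ : ℕ) : ℝ) ^ (-(2 * α)) ≤ A :=
    rpow_neg_le_of_rpow_one_div_le (by positivity) hα.le
      ((Nat.le_ceil _).trans (by exact_mod_cast le_max_right k₁ c₂))
  have hA : 0 ≤ A := by positivity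
  have hB : 0 ≤ B := by positivity
  calc _ ≤ (k₁ : ℝ) / n + ((max k₁ c₂ - k₁ : ℕ) : ℝ) / (n * m) +
          3 * C / (2 * tα) * (k₁ : ℝ) ^ (-(2 * tα)) + R ^ 2 * ((max k₁ c₂ : ℕ) : ℝ) ^ (-(2 * α)) :=
        doubleTruncationRisk_le hm (by positivity) hα.le htlam₀ htlam hg hgR hk₁ (le_max_left _ _)
    _ ≤ 2 * B + 2 * A + 3 * C / (2 * tα) * B + R ^ 2 * A := by gcongr
    _ ≤ (2 + 3 * C / (2 * tα) + R ^ 2) * (A + B) := by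
        have hc : 0 ≤ 3 * C / (2 * tα) := by positivity
        nlinarith [mul_nonneg hc hA, mul_nonneg (sq_nonneg R) hB]

/-- With `λ̃ₖ ≤ C k^(-1-2ᾱ)` and the oracle thresholds `k₁ = ⌈n^(1/(1+2ᾱ))⌉`,
`k₂ = max(k₁, ⌈(nm)^(1/(1+2α))⌉)`, the double-truncation risk
`R(k₁,k₂) = k₁/n + ∑_{k₁<k≤k₂}(λ̃ₖ(1+1/m) + 1/(nm)) + ∑_{k>k₂}(gₖ² + λ̃ₖ)` is bounded
uniformly over the Sobolev ellipsoid by a multiple of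
`(nm)^(-2α/(1+2α)) + n^(-2ᾱ/(1+2ᾱ))`. (Coefficients are indexed from 1; the Lean index
`k` is coefficient `k+1`.) -/
theorem double_truncation_oracle_rate (C α tα R : ℝ) (hC : 0 < C) (hα : 0 < α)
    (htα : 0 < tα) (hR : 0 < R) :
    ∃ C' : ℝ, 0 < C' ∧
      ∀ n m : ℕ, 1 ≤ n → 1 ≤ m →
      ∀ tlam : ℕ → ℝ, (∀ k, 0 ≤ tlam k) →
        (∀ k : ℕ, tlam k ≤ C * ((k + 1 : ℕ) : ℝ) ^ (-1 - 2 * tα)) →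
      ∀ g : ℕ → ℝ,
        Summable (fun k => g k ^ 2 * ((k + 1 : ℕ) : ℝ) ^ (2 * α)) →
        (∑' k, g k ^ 2 * ((k + 1 : ℕ) : ℝ) ^ (2 * α)) ≤ R ^ 2 →
      ((⌈(n : ℝ) ^ (1 / (1 + 2 * tα))⌉₊ : ℝ) / n +
          (∑ k ∈ Finset.Ico ⌈(n : ℝ) ^ (1 / (1 + 2 * tα))⌉₊
              (max ⌈(n : ℝ) ^ (1 / (1 + 2 * tα))⌉₊
                ⌈((n * m : ℕ) : ℝ) ^ (1 / (1 + 2 * α))⌉₊),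
            (tlam k * (1 + (m : ℝ)⁻¹) + ((n : ℝ) * m)⁻¹)) +
          ∑' j, (g ((max ⌈(n : ℝ) ^ (1 / (1 + 2 * tα))⌉₊
                ⌈((n * m : ℕ) : ℝ) ^ (1 / (1 + 2 * α))⌉₊) + j) ^ 2 +
              tlam ((max ⌈(n : ℝ) ^ (1 / (1 + 2 * tα))⌉₊
                ⌈((n * m : ℕ) : ℝ) ^ (1 / (1 + 2 * α))⌉₊) + j))) ≤
        C' * (((n * m : ℕ) : ℝ) ^ (-(2 * α) / (1 + 2 * α)) +
          (n : ℝ) ^ (-(2 * tα) / (1 + 2 * tα))) :=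
  double_truncation_oracle_rate_general C α tα R hC hα htα
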